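/- (Strict Bondareva–Shapley, sufficiency direction via duality.) Let (N, φ) be a characteristic function game on a finite player set N. If for every family of weights λ_C ∈ [0,1] over nonempty proper coalitions C ⊊ N with Σ_{C∋i} λ_C = 1 for all i ∈ N one has Σ_C λ_C·φ(C) < φ(N), then there exists u ∈ ℝⁿ with Σ_{i∈N} u_i = φ(N) and Σ_{i∈C} u_i > φ(C) for every nonempty proper C ⊊ N. -/

import Mathlib

/-!
In `(ι → ℝ) × ℝ` consider the polytope `P` spanned by the points `(𝟙_C, φ C)`, `C` a proper
coalition, and the closed cone `L = {(t • 𝟙, s) | t * φ N ≤ s}`. A common point of `P` and `L`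
is a nonnegative family of weights covering every player equally often, `t > 0` times, with
value at least `t * φ N`; dividing by `t` gives a balanced family contradicting the hypothesis.
So `P` and `L` are disjoint, and a functional `(w, c)` that is nonnegative on `L` and negative
on `P` satisfies `∑ w + c * φ N = 0`, `c ≥ 0` and `∑_{i ∈ C} w i + c * φ C < 0`. With at least
two players `c = 0` is impossible (test `{i}` and its complement), and `u = -w / c` lies in the
strict core.
-/

open Finset

namespace BondarevaShapley

variable {ι : Type*}

section Cone

variable [Fintype ι]

/-- The cone `{(t • 𝟙, s) | a * t ≤ s}`, as the preimage of a nonnegative orthant. -/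
noncomputable def uniformCone (a : ℝ) : ProperCone ℝ ((ι → ℝ) × ℝ) :=
  (ProperCone.positive ℝ ((ι → ι → ℝ) × (ι → ℝ))).comap <| LinearMap.toContinuousLinearMap
    { toFun := fun p => (fun i j => p.1 j - p.1 i, fun i => p.2 - a * p.1 i)
      map_add' := fun p q => by ext <;> simp <;> ring
      map_smul' := fun r p => by ext <;> simp <;> ring }

lemma mem_uniformCone {a : ℝ} {p : (ι → ℝ) × ℝ} :
    p ∈ uniformCone a ↔ (∀ i j, p.1 i ≤ p.1 j) ∧ ∀ i, a * p.1 i ≤ p.2 := by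
  simp [uniformCone, Prod.le_def, Pi.le_def]

lemma mk_mem_uniformCone (a t : ℝ) {r : ℝ} (hr : 0 ≤ r) :
    ((fun _ => t, a * t + r) : (ι → ℝ) × ℝ) ∈ uniformCone a :=
  mem_uniformCone.mpr ⟨fun _ _ => le_rfl, fun _ => by simpa using hr⟩

end Cone

section CoalitionPoint

variable [DecidableEq ι] (φ : Finset ι → ℝ)

def coalitionPoint (C : Finset ι) : (ι → ℝ) × ℝ :=
  (fun i => if i ∈ C then 1 else 0, φ C)

lemma coalitionPoint_injective : Function.Injective (coalitionPoint φ) := by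
  intro C D hCD
  ext i
  have := congr_fun (congr_arg Prod.fst hCD) i
  simp only [coalitionPoint] at this
  split_ifs at this <;> simp_all

lemma sum_smul_coalitionPoint (s : Finset (Finset ι)) (w : Finset ι → ℝ) :
    ∑ C ∈ s, w C • coalitionPoint φ C =
      (fun i => ∑ C ∈ s.filter (i ∈ ·), w C, ∑ C ∈ s, w C * φ C) := by
  ext <;> simp [coalitionPoint, Prod.fst_sum, Prod.snd_sum, Finset.sum_apply, sum_filter]

end CoalitionPoint

variable [Fintype ι] [DecidableEq ι]

lemma apply_mk_eq_sum {F : Type*} [FunLike F ((ι → ℝ) × ℝ) ℝ]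
    [LinearMapClass F ℝ ((ι → ℝ) × ℝ) ℝ] (f : F) (x : ι → ℝ) (s : ℝ) :
    f (x, s) = ∑ i, x i * f (Pi.single i 1, 0) + s * f (0, 1) := by
  have : (x, s) = ∑ i, x i • ((Pi.single i 1 : ι → ℝ), (0 : ℝ)) + s • ((0 : ι → ℝ), (1 : ℝ)) := by
    ext <;> simp [Prod.fst_sum, Prod.snd_sum, Finset.sum_apply, Pi.single_apply]
  rw [this, map_add, map_sum, map_smul]
  simp_rw [map_smul, smul_eq_mul]

variable (ι) in
def properCoalitions : Finset (Finset ι) :=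
  univ.filter fun C => C.Nonempty ∧ C ≠ univ

@[simp]
lemma mem_properCoalitions {C : Finset ι} : C ∈ properCoalitions ι ↔ C.Nonempty ∧ C ≠ univ := by
  simp [properCoalitions]

def IsBalanced (lam : Finset ι → ℝ) : Prop :=
  ∀ i, ∑ C ∈ (properCoalitions ι).filter (i ∈ ·), lam C = 1

def StrictlyBalanced (φ : Finset ι → ℝ) : Prop :=
  ∀ lam : Finset ι → ℝ, (∀ C ∈ properCoalitions ι, 0 ≤ lam C) → IsBalanced lam →
    ∑ C ∈ properCoalitions ι, lam C * φ C < φ univ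

def InStrictCore (φ : Finset ι → ℝ) (u : ι → ℝ) : Prop :=
  ∑ i, u i = φ univ ∧ ∀ C ∈ properCoalitions ι, φ C < ∑ i ∈ C, u i

lemma filter_properCoalitions_mem (i : ι) :
    (properCoalitions ι).filter (i ∈ ·) =
      univ.filter fun C : Finset ι => C.Nonempty ∧ C ≠ univ ∧ i ∈ C := by
  ext C
  simp [and_assoc]

lemma StrictlyBalanced.of_Icc {φ : Finset ι → ℝ}
    (h : ∀ lam : Finset ι → ℝ, (∀ C, lam C ∈ Set.Icc (0 : ℝ) 1) →
      (∀ i : ι, ∑ C ∈ univ.filter (fun C : Finset ι => C.Nonempty ∧ C ≠ univ ∧ i ∈ C),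
        lam C = 1) →
      ∑ C ∈ properCoalitions ι, lam C * φ C < φ univ) :
    StrictlyBalanced φ := by
  intro lam hlam hbal
  -- Off the proper coalitions `lam` is irrelevant, and on them balancedness bounds it by `1`.
  set lam' : Finset ι → ℝ := fun C => if C ∈ properCoalitions ι then lam C else 0
  have hlam'_eq : ∀ C ∈ properCoalitions ι, lam' C = lam C := fun _ hC => if_pos hC
  have hlam'_eq_zero : ∀ C ∉ properCoalitions ι, lam' C = 0 := fun _ hC => if_neg hC
  have hlam'_nonneg : ∀ C, 0 ≤ lam' C := fun C => by
    by_cases hC : C ∈ properCoalitions ι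
    · exact hlam'_eq C hC ▸ hlam C hC
    · exact (hlam'_eq_zero C hC).ge
  have hbal' : IsBalanced lam' := fun i => by
    rw [← hbal i]
    exact sum_congr rfl fun C hC => hlam'_eq C (mem_filter.mp hC).1
  have hIcc : ∀ C, lam' C ∈ Set.Icc (0 : ℝ) 1 := by
    intro C
    refine ⟨hlam'_nonneg C, ?_⟩
    by_cases hC : C ∈ properCoalitions ι
    · obtain ⟨i, hi⟩ := (mem_properCoalitions.mp hC).1
      rw [← hbal' i]
      exact single_le_sum (fun D _ => hlam'_nonneg D) (mem_filter.mpr ⟨hC, hi⟩)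
    · exact (hlam'_eq_zero C hC).trans_le zero_le_one
  calc ∑ C ∈ properCoalitions ι, lam C * φ C
      = ∑ C ∈ properCoalitions ι, lam' C * φ C := sum_congr rfl fun C hC => by rw [hlam'_eq C hC]
    _ < φ univ := h lam' hIcc fun i => filter_properCoalitions_mem i ▸ hbal' i

variable {φ : Finset ι → ℝ}

lemma StrictlyBalanced.sum_mul_lt_of_uniform_cover (h : StrictlyBalanced φ)
    {w : Finset ι → ℝ} {t : ℝ}
    (hw₀ : ∀ C ∈ properCoalitions ι, 0 ≤ w C) (hw₁ : ∑ C ∈ properCoalitions ι, w C = 1)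
    (hcover : ∀ i, ∑ C ∈ (properCoalitions ι).filter (i ∈ ·), w C = t) :
    ∑ C ∈ properCoalitions ι, w C * φ C < t * φ univ := by
  have ht : 0 < t := by
    obtain ⟨C, hC, hwC⟩ : ∃ C ∈ properCoalitions ι, 0 < w C :=
      exists_lt_of_sum_lt (f := 0) (by simp [hw₁])
    obtain ⟨i, hi⟩ := (mem_properCoalitions.mp hC).1
    calc 0 < w C := hwC
      _ ≤ t := hcover i ▸ single_le_sum (fun D hD => hw₀ D (mem_filter.mp hD).1)
          (mem_filter.mpr ⟨hC, hi⟩)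
  have hbal : IsBalanced (fun C => w C / t) := fun i => by
    rw [← sum_div, hcover i, div_self ht.ne']
  have := h _ (fun C hC => div_nonneg (hw₀ C hC) ht.le) hbal
  simp_rw [div_mul_eq_mul_div, ← sum_div, div_lt_iff₀ ht] at this
  linarith

lemma StrictlyBalanced.disjoint_convexHull_uniformCone [Nonempty ι] (h : StrictlyBalanced φ) :
    Disjoint (convexHull ℝ ((properCoalitions ι).image (coalitionPoint φ) : Set ((ι → ℝ) × ℝ)))
      (uniformCone (ι := ι) (φ univ) : Set ((ι → ℝ) × ℝ)) := by
  rw [Set.disjoint_left]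
  intro p hpP hpL
  obtain ⟨w, hw₀, hw₁, rfl⟩ := Finset.mem_convexHull'.mp hpP
  rw [forall_mem_image] at hw₀
  rw [sum_image (coalitionPoint_injective φ).injOn] at hw₁ hpL
  rw [SetLike.mem_coe, sum_smul_coalitionPoint, mem_uniformCone] at hpL
  obtain ⟨hconst, hval⟩ := hpL
  obtain ⟨i₀⟩ := ‹Nonempty ι›
  have := h.sum_mul_lt_of_uniform_cover hw₀ hw₁
    fun i => le_antisymm (hconst i i₀) (hconst i₀ i)
  linarith [hval i₀]

lemma StrictlyBalanced.exists_separating_weights [Nonempty ι] (h : StrictlyBalanced φ) :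
    ∃ (w : ι → ℝ) (c : ℝ), ∑ i, w i + c * φ univ = 0 ∧ 0 ≤ c ∧
      ∀ C ∈ properCoalitions ι, ∑ i ∈ C, w i + c * φ C < 0 := by
  obtain ⟨f, hL, hP⟩ := (uniformCone (φ univ)).hyperplane_separation (convex_convexHull ℝ _)
    ((finite_toSet _).isCompact_convexHull ℝ) h.disjoint_convexHull_uniformCone
  set w : ι → ℝ := fun i => f (Pi.single i 1, 0)
  set c := f (0, 1)
  have hf : ∀ x s, f (x, s) = ∑ i, x i * w i + s * c := apply_mk_eq_sum f
  have hcone : ∀ t r, 0 ≤ r → 0 ≤ t * (∑ i, w i + c * φ univ) + r * c := fun t r hr => by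
    have := hL _ (mk_mem_uniformCone (φ univ) t hr)
    rw [hf, ← mul_sum] at this
    linarith
  refine ⟨w, c, le_antisymm ?_ ?_, ?_, fun C hC => ?_⟩
  · linarith [hcone (-1) 0 le_rfl]
  · linarith [hcone 1 0 le_rfl]
  · linarith [hcone 0 1 zero_le_one]
  · have := hP _ (subset_convexHull ℝ _ (mem_image_of_mem _ hC))
    rw [coalitionPoint, hf] at this
    simpa [ite_mul, sum_ite_mem, mul_comm] using this

lemma exists_inStrictCore_of_separating_weights [Nontrivial ι] {w : ι → ℝ} {c : ℝ}
    (hsum : ∑ i, w i + c * φ univ = 0) (hc : 0 ≤ c)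
    (hC : ∀ C ∈ properCoalitions ι, ∑ i ∈ C, w i + c * φ C < 0) :
    ∃ u, InStrictCore φ u := by
  have hc : 0 < c := by
    refine hc.lt_of_ne' fun hc0 => ?_
    obtain ⟨i⟩ := ‹Nontrivial ι›.to_nonempty
    obtain ⟨j, hji⟩ := exists_ne i
    have hi := hC {i} (by simp)
    have hi' := hC {i}ᶜ <| mem_properCoalitions.mpr
      ⟨⟨j, by simpa using hji⟩, (compl_ne_univ_iff_nonempty _).mpr (singleton_nonempty i)⟩
    have := sum_compl_add_sum {i} w
    simp only [hc0, zero_mul, add_zero] at hi hi' hsum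
    linarith
  refine ⟨fun i => -w i / c, ?_, fun C hC' => ?_⟩
  · rw [← sum_div, sum_neg_distrib, div_eq_iff hc.ne']
    linarith
  · rw [← sum_div, sum_neg_distrib, lt_div_iff₀ hc]
    linarith [hC C hC']

lemma exists_inStrictCore_of_subsingleton [Subsingleton ι] [Nonempty ι] (φ : Finset ι → ℝ) :
    ∃ u, InStrictCore φ u := by
  obtain ⟨i⟩ := ‹Nonempty ι›
  refine ⟨fun _ => φ univ, Fintype.sum_subsingleton _ i, fun C hC => ?_⟩
  obtain ⟨hne, hproper⟩ := mem_properCoalitions.mp hC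
  exact absurd hne.eq_univ hproper

theorem StrictlyBalanced.exists_inStrictCore [Nonempty ι] (h : StrictlyBalanced φ) :
    ∃ u, InStrictCore φ u := by
  rcases subsingleton_or_nontrivial ι with _ | _
  · exact exists_inStrictCore_of_subsingleton φ
  · obtain ⟨w, c, hsum, hc, hC⟩ := h.exists_separating_weights
    exact exists_inStrictCore_of_separating_weights hsum hc hC

end BondarevaShapley

open BondarevaShapley in
theorem stmt_14 {n : ℕ} (hn : 1 ≤ n) (φ : Finset (Fin n) → ℝ)
    (h : ∀ lam : Finset (Fin n) → ℝ,
      (∀ C, lam C ∈ Set.Icc (0:ℝ) 1) →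
      (∀ i : Fin n,
        ∑ C ∈ (Finset.univ.filter
            (fun C : Finset (Fin n) => C.Nonempty ∧ C ≠ Finset.univ ∧ i ∈ C)),
          lam C = 1) →
      ∑ C ∈ (Finset.univ.filter
          (fun C : Finset (Fin n) => C.Nonempty ∧ C ≠ Finset.univ)),
        lam C * φ C < φ Finset.univ) :
    ∃ u : Fin n → ℝ, (∑ i, u i = φ Finset.univ) ∧
      ∀ C : Finset (Fin n), C.Nonempty → C ≠ Finset.univ → φ C < ∑ i ∈ C, u i := by
  have : Nonempty (Fin n) := Fin.pos_iff_nonempty.mp hn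
  obtain ⟨u, hsum, hcore⟩ := (StrictlyBalanced.of_Icc h).exists_inStrictCore
  exact ⟨u, hsum, fun C hne hproper => hcore C (mem_properCoalitions.mpr ⟨hne, hproper⟩)⟩
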